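/- arXiv:2512.20972 — 4 statements merged into one kernel-verified Lean document; each statement's English description precedes it below -/
import Mathlib

section
/- Let E be a nonzero complex symmetric function space on (0,∞) that is strongly symmetric. Let A ⊆ (0,∞) be measurable with 0 < m(A) < ∞ and χ_A ∈ E. Then every f ∈ E is integrable over A, and sup{ |∫_A f dm| : f ∈ E, ‖f‖_E ≤ 1 } = m(A) / ‖χ_A‖_E. Equivalently, the functional f ↦ (‖χ_A‖_E^2 / m(A)) ∫_A f dm is a support functional of χ_A in E: it has dual norm ‖χ_A‖_E and takes the value ‖χ_A‖_E^2 at χ_A. -/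
/-!
Common framework: complex symmetric function spaces on intervals of `(0,∞)`,
modelled on a.e.-equivalence classes of measurable functions (`AEEqFun`).
-/

open MeasureTheory Filter Set Topology
open scoped ENNReal

noncomputable section

namespace SymmPaper

/-- Lebesgue measure on the interval `(0,1)`. -/
def m01 : Measure ℝ := volume.restrict (Set.Ioo 0 1)

/-- Lebesgue measure on the half line `(0,∞)`. -/
def mInf : Measure ℝ := volume.restrict (Set.Ioi 0)

/-- The distribution function `s ↦ μ{ |f| > s }` of (the class of) a measurable function. -/
def distrib (μ : Measure ℝ) (f : ℝ →ₘ[μ] ℂ) (s : ℝ) : ℝ≥0∞ :=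
  μ {x | s < ‖f x‖}

/-- The decreasing rearrangement `μ(t; f) = inf{ s ≥ 0 : μ{|f| > s} ≤ t }`. -/
def rearr (μ : Measure ℝ) (f : ℝ →ₘ[μ] ℂ) (t : ℝ) : ℝ :=
  sInf {s : ℝ | 0 ≤ s ∧ distrib μ f s ≤ ENNReal.ofReal t}

/-- Membership in `S(I)`: `μ{|f| > s} < ∞` for some `s > 0`. -/
def memS (μ : Measure ℝ) (f : ℝ →ₘ[μ] ℂ) : Prop :=
  ∃ s > (0 : ℝ), distrib μ f s < ⊤

/-- A (complex) symmetric function space on the measure space `(ℝ, μ)`: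
a linear subspace of `S(I)` with a complete norm such that domination of decreasing
rearrangements implies membership together with the norm inequality. -/
structure SymmetricSpace (μ : Measure ℝ) where
  carrier : Set (ℝ →ₘ[μ] ℂ)
  nrm : (ℝ →ₘ[μ] ℂ) → ℝ
  memS_of_mem : ∀ f ∈ carrier, memS μ f
  zero_mem : 0 ∈ carrier
  add_mem : ∀ f ∈ carrier, ∀ g ∈ carrier, f + g ∈ carrier
  smul_mem : ∀ (c : ℂ), ∀ f ∈ carrier, c • f ∈ carrier
  nrm_eq_zero_iff : ∀ f ∈ carrier, (nrm f = 0 ↔ f = 0)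
  nrm_add_le : ∀ f ∈ carrier, ∀ g ∈ carrier, nrm (f + g) ≤ nrm f + nrm g
  nrm_smul : ∀ (c : ℂ), ∀ f ∈ carrier, nrm (c • f) = ‖c‖ * nrm f
  symm_mem : ∀ f ∈ carrier, ∀ g, memS μ g →
    (∀ t > (0 : ℝ), rearr μ g t ≤ rearr μ f t) → g ∈ carrier ∧ nrm g ≤ nrm f
  complete : ∀ u : ℕ → ℝ →ₘ[μ] ℂ, (∀ n, u n ∈ carrier) →
    (∀ ε > (0 : ℝ), ∃ N : ℕ, ∀ m ≥ N, ∀ n ≥ N, nrm (u m - u n) < ε) →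
    ∃ g ∈ carrier, Tendsto (fun n => nrm (u n - g)) atTop (nhds 0)

/-- A symmetric space is nonzero if it contains a function that is not a.e. zero. -/
def SymmetricSpace.Nonzero {μ : Measure ℝ} (E : SymmetricSpace μ) : Prop :=
  ∃ f ∈ E.carrier, f ≠ 0

/-- `E` coincides with `L_p` (as sets). -/
def coincidesLp {μ : Measure ℝ} (E : SymmetricSpace μ) (p : ℝ≥0∞) : Prop :=
  E.carrier = {f : ℝ →ₘ[μ] ℂ | MemLp (⇑f) p μ}

/-- A surjective linear isometry from `E` onto `F`. -/
def IsIsometryOnto {μ ν : Measure ℝ} (E : SymmetricSpace μ) (F : SymmetricSpace ν)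
    (T : (ℝ →ₘ[μ] ℂ) → (ℝ →ₘ[ν] ℂ)) : Prop :=
  (∀ f ∈ E.carrier, T f ∈ F.carrier) ∧
  (∀ f ∈ E.carrier, ∀ g ∈ E.carrier, T (f + g) = T f + T g) ∧
  (∀ (c : ℂ), ∀ f ∈ E.carrier, T (c • f) = c • T f) ∧
  (∀ f ∈ E.carrier, F.nrm (T f) = E.nrm f) ∧
  (∀ g ∈ F.carrier, ∃ f ∈ E.carrier, T f = g)

end SymmPaper

namespace SymmPaper

/-- The Köthe dual `E^×` of a symmetric space:
all `g ∈ S(I)` with `sup{ ∫ |f g| dm : f ∈ E, ‖f‖_E ≤ 1 } < ∞`. -/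
def KotheDual {μ : Measure ℝ} (E : SymmetricSpace μ) : Set (ℝ →ₘ[μ] ℂ) :=
  {g | memS μ g ∧ ∃ C : ℝ, ∀ f ∈ E.carrier, E.nrm f ≤ 1 →
    (∫⁻ x, ‖f x * g x‖₊ ∂μ) ≤ ENNReal.ofReal C}

/-- `E` is strongly symmetric: Hardy–Littlewood–Pólya submajorization of decreasing
rearrangements implies the norm inequality. -/
def StronglySymmetric {μ : Measure ℝ} (E : SymmetricSpace μ) : Prop :=
  ∀ f ∈ E.carrier, ∀ g ∈ E.carrier,
    (∀ t > (0 : ℝ), (∫⁻ s in Set.Ioo 0 t, ENNReal.ofReal (rearr μ g s)) ≤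
      ∫⁻ s in Set.Ioo 0 t, ENNReal.ofReal (rearr μ f s)) →
    E.nrm g ≤ E.nrm f

/-- `E` has the Fatou property: if `0 ≤ f_n ↑` a.e., `f_n → f` a.e. and the norms of the
`f_n` are bounded, then `f ∈ E` and `‖f‖_E = sup_n ‖f_n‖_E`. -/
def FatouProperty {μ : Measure ℝ} (E : SymmetricSpace μ) : Prop :=
  ∀ (u : ℕ → ℝ →ₘ[μ] ℂ) (f : ℝ →ₘ[μ] ℂ), (∀ n, u n ∈ E.carrier) →
    (∀ n, ∀ᵐ x ∂μ, (u n x).im = 0 ∧ 0 ≤ (u n x).re ∧ (u n x).re ≤ (u (n + 1) x).re) →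
    (∀ᵐ x ∂μ, Tendsto (fun n => u n x) atTop (nhds (f x))) →
    BddAbove (Set.range fun n => E.nrm (u n)) →
    f ∈ E.carrier ∧ E.nrm f = ⨆ n, E.nrm (u n)

end SymmPaper

namespace SymmPaper

/-- The indicator function `χ_A` of a measurable set, as an element over `(0,∞)`. -/
def indSet (A : Set ℝ) (hA : MeasurableSet A) : ℝ →ₘ[mInf] ℂ :=
  AEEqFun.mk (A.indicator fun _ => (1 : ℂ))
    (stronglyMeasurable_const.indicator hA).aestronglyMeasurable


/-!
For `f ∈ E` put `k = f χ_A`. The layer-cake formula gives `∫_A |f| = ∫_0^{m(A)} μ(t; k) dt`,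
and `μ(·; k) ≤ μ(·; f)`. As `μ(·; k)` decreases, so do its running averages
`t ↦ t⁻¹ ∫_0^t μ(s; k) ds`; hence for `c = m(A)⁻¹ ∫_A |f|` the function `c χ_A`, whose
rearrangement is `c χ_(0, m(A))`, is submajorized by `f`. Strong symmetry then gives
`c ‖χ_A‖_E ≤ ‖f‖_E`, i.e. `∫_A |f| ≤ m(A) ‖f‖_E / ‖χ_A‖_E`, with equality at `f = χ_A / ‖χ_A‖_E`.
-/

section Rearrangement

variable {μ : Measure ℝ} {f g : ℝ →ₘ[μ] ℂ}

theorem distrib_antitone (f : ℝ →ₘ[μ] ℂ) : Antitone (distrib μ f) :=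
  fun _ _ hst => measure_mono fun _ hx => lt_of_le_of_lt hst hx

theorem distrib_le_of_forall_lt {s : ℝ} {T : ℝ≥0∞} (h : ∀ r > s, distrib μ f r ≤ T) :
    distrib μ f s ≤ T := by
  have hmono : Monotone fun n : ℕ => {x | s + 1 / (n + 1) < ‖f x‖} := fun n m hnm x hx => by
    simp only [mem_ofPred_eq] at hx ⊢
    exact lt_of_le_of_lt (by gcongr) hx
  have hunion : {x | s < ‖f x‖} = ⋃ n : ℕ, {x | s + 1 / (n + 1) < ‖f x‖} := by
    ext x
    simp only [mem_ofPred_eq, mem_iUnion]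
    refine ⟨fun hx => ?_, fun ⟨n, hn⟩ => (lt_add_of_pos_right s (by positivity)).trans hn⟩
    obtain ⟨n, hn⟩ := exists_nat_one_div_lt (sub_pos.2 hx)
    exact ⟨n, by linarith⟩
  rw [distrib, hunion, hmono.measure_iUnion]
  exact iSup_le fun n => h _ (lt_add_of_pos_right s (by positivity))

theorem rearr_nonneg (f : ℝ →ₘ[μ] ℂ) (t : ℝ) : 0 ≤ rearr μ f t :=
  Real.sInf_nonneg fun _ hx => hx.1

theorem rearr_le_of_distrib_le {s t : ℝ} (hs : 0 ≤ s) (h : distrib μ f s ≤ ENNReal.ofReal t) :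
    rearr μ f t ≤ s :=
  csInf_le ⟨0, fun _ hx => hx.1⟩ ⟨hs, h⟩

theorem nonempty_distrib_le (hf : memS μ f) {t : ℝ} (ht : 0 < t) :
    {s : ℝ | 0 ≤ s ∧ distrib μ f s ≤ ENNReal.ofReal t}.Nonempty := by
  obtain ⟨s₀, hs₀, hfin⟩ := hf
  have hanti : Antitone fun n : ℕ => {x | s₀ + n < ‖f x‖} := fun n m hnm x hx => by
    simp only [mem_ofPred_eq] at hx ⊢
    exact lt_of_le_of_lt (by gcongr) hx
  have hempty : ⋂ n : ℕ, {x | s₀ + n < ‖f x‖} = ∅ := by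
    refine eq_empty_of_forall_notMem fun x hx => ?_
    obtain ⟨n, hn⟩ := exists_nat_gt (‖f x‖ - s₀)
    have := mem_iInter.1 hx n
    simp only [mem_ofPred_eq] at this
    linarith
  have htend := tendsto_measure_iInter_atTop
    (fun _ => (measurableSet_lt measurable_const f.measurable.norm).nullMeasurableSet) hanti
    ⟨0, by simpa [distrib] using hfin.ne⟩
  rw [hempty, measure_empty] at htend
  obtain ⟨n, hn⟩ := (htend.eventually_lt_const (ENNReal.ofReal_pos.2 ht)).exists
  exact ⟨s₀ + n, by positivity, hn.le⟩

theorem lt_rearr_iff (hf : memS μ f) {t σ : ℝ} (ht : 0 < t) (hσ : 0 ≤ σ) :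
    σ < rearr μ f t ↔ ENNReal.ofReal t < distrib μ f σ := by
  refine ⟨fun h => not_le.1 fun hle => (rearr_le_of_distrib_le hσ hle).not_gt h,
    fun h => not_le.1 fun hle => h.not_ge (distrib_le_of_forall_lt fun r hr => ?_)⟩
  obtain ⟨s, hs, hsr⟩ := exists_lt_of_csInf_lt (nonempty_distrib_le hf ht) (hle.trans_lt hr)
  exact (distrib_antitone f hsr.le).trans hs.2

theorem rearr_le_rearr (hf : memS μ f) (h : ∀ s, 0 ≤ s → distrib μ g s ≤ distrib μ f s)
    {t : ℝ} (ht : 0 < t) : rearr μ g t ≤ rearr μ f t :=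
  csInf_le_csInf ⟨0, fun _ hx => hx.1⟩ (nonempty_distrib_le hf ht)
    fun s hs => ⟨hs.1, (h s hs.1).trans hs.2⟩

theorem rearr_antitoneOn (hf : memS μ f) : AntitoneOn (rearr μ f) (Ioi 0) :=
  fun _ hs _ _ hst => csInf_le_csInf ⟨0, fun _ hx => hx.1⟩ (nonempty_distrib_le hf hs)
    fun _ hu => ⟨hu.1, hu.2.trans (ENNReal.ofReal_le_ofReal hst)⟩

theorem rearr_eq_zero_of_distrib_zero_le {a t : ℝ} (h : distrib μ f 0 ≤ ENNReal.ofReal a)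
    (hat : a ≤ t) : rearr μ f t = 0 :=
  (rearr_le_of_distrib_le le_rfl (h.trans (ENNReal.ofReal_le_ofReal hat))).antisymm
    (rearr_nonneg f t)

theorem lintegral_enorm_eq_lintegral_rearr (hf : distrib μ f 0 ≠ ⊤) :
    ∫⁻ x, ‖f x‖ₑ ∂μ = ∫⁻ t in Ioi 0, ENNReal.ofReal (rearr μ f t) := by
  have hfS : memS μ f := ⟨1, one_pos, (distrib_antitone f zero_le_one).trans_lt hf.lt_top⟩
  have hfin : ∀ σ, 0 ≤ σ → distrib μ f σ ≠ ⊤ := fun σ hσ =>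
    ne_top_of_le_ne_top hf (distrib_antitone f hσ)
  -- The distribution function as a real function, antitone on all of `ℝ`; by `hlevel` its
  -- superlevel sets in `(0, ∞)` are the intervals `(0, μ(t; f))`, so the layer-cake formula,
  -- applied to `f` and then to `d`, turns `∫ |f|` into `∫ μ(t; f) dt`.
  set d : ℝ → ℝ := fun σ => (distrib μ f (max σ 0)).toReal
  have hd_anti : Antitone d := fun s t hst =>
    ENNReal.toReal_mono (hfin _ (le_max_right s 0)) (distrib_antitone f (max_le_max hst le_rfl))
  have hd : ∀ σ, 0 ≤ σ → ENNReal.ofReal (d σ) = distrib μ f σ := fun σ hσ => by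
    simp only [d, max_eq_left hσ, ENNReal.ofReal_toReal (hfin σ hσ)]
  have hlevel : ∀ t, 0 < t → {σ | t < d σ} ∩ Ioi 0 = Ioo 0 (rearr μ f t) := fun t ht => by
    ext σ
    simp only [mem_inter_iff, mem_ofPred_eq, mem_Ioi, mem_Ioo, and_comm (b := 0 < σ)]
    refine and_congr_right fun hσ => ?_
    rw [lt_rearr_iff hfS ht hσ.le, ← hd σ hσ.le, ENNReal.ofReal_lt_ofReal_iff_of_nonneg ht.le]
  calc ∫⁻ x, ‖f x‖ₑ ∂μ = ∫⁻ σ in Ioi 0, distrib μ f σ := by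
        simpa only [ofReal_norm, distrib] using lintegral_eq_lintegral_meas_lt μ
          (ae_of_all _ fun x => norm_nonneg (f x)) f.measurable.norm.aemeasurable
    _ = ∫⁻ σ in Ioi 0, ENNReal.ofReal (d σ) :=
        setLIntegral_congr_fun measurableSet_Ioi fun σ hσ => (hd σ hσ.le).symm
    _ = ∫⁻ t in Ioi 0, volume.restrict (Ioi 0) {σ | t < d σ} :=
        lintegral_eq_lintegral_meas_lt _ (ae_of_all _ fun _ => ENNReal.toReal_nonneg)
          hd_anti.measurable.aemeasurable
    _ = ∫⁻ t in Ioi 0, ENNReal.ofReal (rearr μ f t) :=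
        setLIntegral_congr_fun measurableSet_Ioi fun t ht => by
          rw [Measure.restrict_apply (measurableSet_lt measurable_const hd_anti.measurable),
            hlevel t ht, Real.volume_Ioo, sub_zero]

end Rearrangement

section Indicator

variable {μ : Measure ℝ} {A : Set ℝ}

theorem distrib_of_norm_ae_eq_indicator {g : ℝ →ₘ[μ] ℂ} {c s : ℝ}
    (hg : ∀ᵐ x ∂μ, ‖g x‖ = A.indicator (fun _ => c) x) (hs : 0 ≤ s) :
    distrib μ g s = if s < c then μ A else 0 := by
  have hlevel : {x | s < ‖g x‖} =ᵐ[μ] (if s < c then A else ∅ : Set ℝ) := by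
    filter_upwards [hg] with x hx
    change (s < ‖g x‖) = (x ∈ if s < c then A else ∅)
    rw [hx]
    by_cases hxA : x ∈ A <;> split_ifs <;> simp_all
  rw [distrib, measure_congr hlevel]
  split_ifs <;> simp

theorem rearr_of_norm_ae_eq_indicator {g : ℝ →ₘ[μ] ℂ} {c t : ℝ}
    (hg : ∀ᵐ x ∂μ, ‖g x‖ = A.indicator (fun _ => c) x) (hc : 0 ≤ c) :
    rearr μ g t = if ENNReal.ofReal t < μ A then c else 0 := by
  have hc' : distrib μ g c = 0 := by
    rw [distrib_of_norm_ae_eq_indicator hg hc, if_neg (lt_irrefl c)]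
  split_ifs with htA
  · refine (rearr_le_of_distrib_le hc (hc'.le.trans zero_le)).antisymm
      (le_csInf ⟨c, hc, hc'.le.trans zero_le⟩ fun s hs => not_lt.1 fun hsc => ?_)
    have hdistrib := hs.2
    rw [distrib_of_norm_ae_eq_indicator hg hs.1, if_pos hsc] at hdistrib
    exact hdistrib.not_gt htA
  · refine (rearr_le_of_distrib_le le_rfl ?_).antisymm (rearr_nonneg g t)
    rw [distrib_of_norm_ae_eq_indicator hg le_rfl]
    split_ifs
    exacts [not_lt.1 htA, zero_le]

theorem setLIntegral_rearr_of_norm_ae_eq_indicator {g : ℝ →ₘ[μ] ℂ} {a c t : ℝ}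
    (hg : ∀ᵐ x ∂μ, ‖g x‖ = A.indicator (fun _ => c) x) (hc : 0 ≤ c)
    (hμA : μ A = ENNReal.ofReal a) :
    ∫⁻ s in Ioo 0 t, ENNReal.ofReal (rearr μ g s)
      = ENNReal.ofReal c * ENNReal.ofReal (min t a) := by
  have hstep : ∀ s ∈ Ioo 0 t,
      ENNReal.ofReal (rearr μ g s) = (Iio a).indicator (fun _ => ENNReal.ofReal c) s :=
    fun s hs => by
      rw [rearr_of_norm_ae_eq_indicator hg hc, hμA]
      by_cases hsa : s < a
      · simp [hsa, hs.1.trans hsa]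
      · simp [ENNReal.ofReal_lt_ofReal_iff', hsa]
  have hinter : Iio a ∩ Ioo 0 t = Ioo 0 (min t a) := by
    ext s
    simp only [mem_inter_iff, mem_Iio, mem_Ioo, lt_min_iff]
    tauto
  rw [setLIntegral_congr_fun measurableSet_Ioo hstep, lintegral_indicator measurableSet_Iio,
    Measure.restrict_restrict measurableSet_Iio, setLIntegral_const, hinter, Real.volume_Ioo,
    sub_zero]

variable {f k : ℝ →ₘ[μ] ℂ}

theorem distrib_le_of_ae_eq_indicator (hk : ⇑k =ᵐ[μ] A.indicator ⇑f) {s : ℝ} (hs : 0 ≤ s) :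
    distrib μ k s ≤ distrib μ f s := by
  refine measure_mono_ae ?_
  filter_upwards [hk] with x hx hxs
  change s < ‖k x‖ at hxs
  change s < ‖f x‖
  rw [hx] at hxs
  by_cases hxA : x ∈ A
  · rwa [indicator_of_mem hxA] at hxs
  · rw [indicator_of_notMem hxA, norm_zero] at hxs
    linarith

theorem distrib_le_measure_of_ae_eq_indicator (hk : ⇑k =ᵐ[μ] A.indicator ⇑f) {s : ℝ}
    (hs : 0 ≤ s) : distrib μ k s ≤ μ A := by
  refine measure_mono_ae ?_
  filter_upwards [hk] with x hx hxs
  change s < ‖k x‖ at hxs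
  change x ∈ A
  rw [hx] at hxs
  by_contra hxA
  rw [indicator_of_notMem hxA, norm_zero] at hxs
  linarith

theorem setLIntegral_enorm_eq_setLIntegral_rearr (hA : MeasurableSet A) (hμA : μ A ≠ ⊤)
    (hk : ⇑k =ᵐ[μ] A.indicator ⇑f) :
    ∫⁻ x in A, ‖f x‖ₑ ∂μ = ∫⁻ t in Ioo 0 (μ A).toReal, ENNReal.ofReal (rearr μ k t) := by
  have hvanish : ∀ t ∈ Ioi (0 : ℝ), ENNReal.ofReal (rearr μ k t)
      = (Iio (μ A).toReal).indicator (fun t => ENNReal.ofReal (rearr μ k t)) t := fun t _ => by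
    by_cases hta : t < (μ A).toReal
    · rw [indicator_of_mem (mem_Iio.2 hta)]
    · have hk0 : distrib μ k 0 ≤ ENNReal.ofReal (μ A).toReal := by
        rw [ENNReal.ofReal_toReal hμA]
        exact distrib_le_measure_of_ae_eq_indicator hk le_rfl
      rw [indicator_of_notMem (mt mem_Iio.1 hta),
        rearr_eq_zero_of_distrib_zero_le hk0 (not_lt.1 hta), ENNReal.ofReal_zero]
  calc ∫⁻ x in A, ‖f x‖ₑ ∂μ = ∫⁻ x, ‖k x‖ₑ ∂μ := by
        rw [← lintegral_indicator hA]
        refine lintegral_congr_ae ?_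
        filter_upwards [hk] with x hx
        rw [hx, enorm_indicator_eq_indicator_enorm]
    _ = ∫⁻ t in Ioi 0, ENNReal.ofReal (rearr μ k t) :=
        lintegral_enorm_eq_lintegral_rearr
          (ne_top_of_le_ne_top hμA (distrib_le_measure_of_ae_eq_indicator hk le_rfl))
    _ = ∫⁻ t in Ioo 0 (μ A).toReal, ENNReal.ofReal (rearr μ k t) := by
        rw [setLIntegral_congr_fun measurableSet_Ioi hvanish,
          lintegral_indicator measurableSet_Iio, Measure.restrict_restrict measurableSet_Iio,
          Iio_inter_Ioi]

end Indicator

theorem ofReal_mul_setLIntegral_Ioo_le {g : ℝ → ℝ≥0∞} (hg : AntitoneOn g (Ioi 0)) {t a : ℝ}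
    (ht : 0 < t) (hta : t ≤ a) :
    ENNReal.ofReal t * ∫⁻ s in Ioo 0 a, g s ≤ ENNReal.ofReal a * ∫⁻ s in Ioo 0 t, g s := by
  set I := ∫⁻ s in Ioo 0 t, g s
  have hsplit : ∫⁻ s in Ioo 0 a, g s = I + ∫⁻ s in Ico t a, g s := by
    rw [← Ioo_union_Ico_eq_Ioo ht hta, lintegral_union measurableSet_Ico
      ((Iio_disjoint_Ici le_rfl).mono Ioo_subset_Iio_self Ico_subset_Ici_self)]
  have hlow : ENNReal.ofReal t * g t ≤ I :=
    calc ENNReal.ofReal t * g t = ∫⁻ _ in Ioo 0 t, g t := by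
          rw [setLIntegral_const, Real.volume_Ioo, sub_zero, mul_comm]
      _ ≤ I := setLIntegral_mono' measurableSet_Ioo fun s hs => hg hs.1 ht hs.2.le
  have hup : ∫⁻ s in Ico t a, g s ≤ ENNReal.ofReal (a - t) * g t :=
    calc ∫⁻ s in Ico t a, g s ≤ ∫⁻ _ in Ico t a, g t :=
          setLIntegral_mono' measurableSet_Ico fun s hs => hg ht (ht.trans_le hs.1) hs.1
      _ = ENNReal.ofReal (a - t) * g t := by rw [setLIntegral_const, Real.volume_Ico, mul_comm]
  calc ENNReal.ofReal t * ∫⁻ s in Ioo 0 a, g s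
      ≤ ENNReal.ofReal t * (I + ENNReal.ofReal (a - t) * g t) := by rw [hsplit]; gcongr
    _ = ENNReal.ofReal t * I + ENNReal.ofReal (a - t) * (ENNReal.ofReal t * g t) := by ring
    _ ≤ ENNReal.ofReal t * I + ENNReal.ofReal (a - t) * I := by gcongr
    _ = ENNReal.ofReal a * I := by
        rw [← add_mul, ← ENNReal.ofReal_add ht.le (sub_nonneg.2 hta), add_sub_cancel]

theorem ofReal_mul_min_le_setLIntegral_Ioo {g : ℝ → ℝ≥0∞} (hg : AntitoneOn g (Ioi 0)) {a c : ℝ}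
    (hca : ENNReal.ofReal c * ENNReal.ofReal a ≤ ∫⁻ s in Ioo 0 a, g s) {t : ℝ} (ht : 0 < t) :
    ENNReal.ofReal c * ENNReal.ofReal (min t a) ≤ ∫⁻ s in Ioo 0 t, g s := by
  rcases le_total a t with hat | hta
  · rw [min_eq_right hat]
    exact hca.trans (lintegral_mono_set (Ioo_subset_Ioo_right hat))
  · rw [min_eq_left hta]
    have ha : ENNReal.ofReal a ≠ 0 := (ENNReal.ofReal_pos.2 (ht.trans_le hta)).ne'
    refine (ENNReal.mul_le_mul_iff_right ha ENNReal.ofReal_ne_top).1 ?_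
    calc ENNReal.ofReal a * (ENNReal.ofReal c * ENNReal.ofReal t)
        = ENNReal.ofReal t * (ENNReal.ofReal c * ENNReal.ofReal a) := by ring
      _ ≤ ENNReal.ofReal t * ∫⁻ s in Ioo 0 a, g s := by gcongr
      _ ≤ ENNReal.ofReal a * ∫⁻ s in Ioo 0 t, g s := ofReal_mul_setLIntegral_Ioo_le hg ht hta

section SymmetricSpace

variable {μ : Measure ℝ} {E : SymmetricSpace μ} {A : Set ℝ} {f χ : ℝ →ₘ[μ] ℂ}

theorem SymmetricSpace.nrm_nonneg (hf : f ∈ E.carrier) : 0 ≤ E.nrm f := by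
  have h := E.nrm_add_le f hf _ (E.smul_mem (-1) f hf)
  rw [E.nrm_smul (-1) f hf, show f + (-1 : ℂ) • f = 0 by module,
    (E.nrm_eq_zero_iff 0 E.zero_mem).2 rfl] at h
  simp only [norm_neg, norm_one, one_mul] at h
  linarith

theorem SymmetricSpace.nrm_pos (hf : f ∈ E.carrier) (hf0 : f ≠ 0) : 0 < E.nrm f :=
  (E.nrm_nonneg hf).lt_of_ne' fun h => hf0 ((E.nrm_eq_zero_iff f hf).1 h)

theorem StronglySymmetric.mul_nrm_le_of_le_setLIntegral (hEs : StronglySymmetric E)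
    (hA : MeasurableSet A) (hμA : μ A ≠ ⊤) (hχ : χ ∈ E.carrier)
    (hχA : ∀ᵐ x ∂μ, ‖χ x‖ = A.indicator 1 x) (hf : f ∈ E.carrier) {c : ℝ} (hc : 0 ≤ c)
    (hcf : ENNReal.ofReal c * μ A ≤ ∫⁻ x in A, ‖f x‖ₑ ∂μ) :
    c * E.nrm χ ≤ E.nrm f := by
  set a := (μ A).toReal
  have hμA' : μ A = ENNReal.ofReal a := (ENNReal.ofReal_toReal hμA).symm
  set k := AEEqFun.mk (A.indicator f) (f.aestronglyMeasurable.indicator hA)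
  have hk : ⇑k =ᵐ[μ] A.indicator ⇑f := AEEqFun.coeFn_mk _ _
  have hkS : memS μ k :=
    ⟨1, one_pos, (distrib_le_measure_of_ae_eq_indicator hk zero_le_one).trans_lt hμA.lt_top⟩
  have hcχ : ∀ᵐ x ∂μ, ‖((c : ℂ) • χ) x‖ = A.indicator (fun _ => c) x := by
    filter_upwards [AEEqFun.coeFn_smul (c : ℂ) χ, hχA] with x hsmul hx
    by_cases hxA : x ∈ A <;> simp_all [abs_of_nonneg hc]
  have hsub : ∀ t > 0, ENNReal.ofReal c * ENNReal.ofReal (min t a)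
      ≤ ∫⁻ s in Ioo 0 t, ENNReal.ofReal (rearr μ k s) :=
    fun t => ofReal_mul_min_le_setLIntegral_Ioo
      (fun s hs u hu hsu => ENNReal.ofReal_le_ofReal (rearr_antitoneOn hkS hs hu hsu))
      (by rwa [← hμA', ← setLIntegral_enorm_eq_setLIntegral_rearr hA hμA hk])
  have hkf : ∀ t, ∫⁻ s in Ioo 0 t, ENNReal.ofReal (rearr μ k s)
      ≤ ∫⁻ s in Ioo 0 t, ENNReal.ofReal (rearr μ f s) := fun t =>
    setLIntegral_mono' measurableSet_Ioo fun s hs => ENNReal.ofReal_le_ofReal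
      (rearr_le_rearr (E.memS_of_mem f hf) (fun _ => distrib_le_of_ae_eq_indicator hk) hs.1)
  have h := hEs f hf _ (E.smul_mem _ _ hχ) fun t ht => by
    rw [setLIntegral_rearr_of_norm_ae_eq_indicator hcχ hc hμA']
    exact (hsub t ht).trans (hkf t)
  rwa [E.nrm_smul _ _ hχ, Complex.norm_real, Real.norm_of_nonneg hc] at h

theorem StronglySymmetric.setLIntegral_enorm_le (hEs : StronglySymmetric E)
    (hA : MeasurableSet A) (hμA : μ A ≠ ⊤) (hχ : χ ∈ E.carrier)
    (hχA : ∀ᵐ x ∂μ, ‖χ x‖ = A.indicator 1 x) (hχpos : 0 < E.nrm χ) (hf : f ∈ E.carrier) :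
    ∫⁻ x in A, ‖f x‖ₑ ∂μ ≤ ENNReal.ofReal ((μ A).toReal * E.nrm f / E.nrm χ) := by
  set J := ∫⁻ x in A, ‖f x‖ₑ ∂μ
  have hbound : ∀ c, 0 ≤ c → ENNReal.ofReal c * μ A ≤ J → c ≤ E.nrm f / E.nrm χ :=
    fun c hc hcJ =>
      (le_div_iff₀ hχpos).2 (hEs.mul_nrm_le_of_le_setLIntegral hA hμA hχ hχA hf hc hcJ)
  have hJ : J ≠ ⊤ := fun hJ => by
    have := hbound (E.nrm f / E.nrm χ + 1) (by have := E.nrm_nonneg hf; positivity)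
      (hJ ▸ le_top)
    linarith
  rcases eq_or_ne (μ A) 0 with h0 | h0
  · simp [J, Measure.restrict_eq_zero.2 h0]
  set a := (μ A).toReal
  have ha : 0 < a := ENNReal.toReal_pos h0 hμA
  have hc := hbound (J.toReal / a) (by positivity) (by
    rw [← ENNReal.ofReal_toReal hμA, ← ENNReal.ofReal_mul (by positivity),
      div_mul_cancel₀ _ ha.ne', ENNReal.ofReal_toReal hJ])
  rw [← ENNReal.ofReal_toReal hJ]
  gcongr
  rwa [mul_div_assoc, ← div_le_iff₀' ha]

end SymmetricSpace

theorem isGreatest_norm_setIntegral {μ : Measure ℝ} {E : SymmetricSpace μ} {A : Set ℝ}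
    {χ : ℝ →ₘ[μ] ℂ} (hχ : χ ∈ E.carrier) (hχpos : 0 < E.nrm χ) {a : ℝ} (ha : 0 ≤ a)
    (hχA : ∫ x in A, χ x ∂μ = a)
    (hbound : ∀ f ∈ E.carrier, ∫⁻ x in A, ‖f x‖ₑ ∂μ ≤ ENNReal.ofReal (a * E.nrm f / E.nrm χ)) :
    IsGreatest {r : ℝ | ∃ f ∈ E.carrier, E.nrm f ≤ 1 ∧ r = ‖∫ x in A, f x ∂μ‖}
      (a / E.nrm χ) := by
  refine ⟨⟨(((E.nrm χ)⁻¹ : ℝ) : ℂ) • χ, E.smul_mem _ _ hχ, ?_, ?_⟩, ?_⟩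
  · rw [E.nrm_smul _ _ hχ, Complex.norm_real, Real.norm_of_nonneg (inv_nonneg.2 hχpos.le),
      inv_mul_cancel₀ hχpos.ne']
  · rw [integral_congr_ae (AEEqFun.coeFn_smul _ χ).restrict]
    simp only [Pi.smul_apply, smul_eq_mul]
    rw [integral_const_mul, hχA, ← Complex.ofReal_mul, Complex.norm_real,
      Real.norm_of_nonneg (by positivity), inv_mul_eq_div]
  · rintro r ⟨f, hf, hf1, rfl⟩
    refine (ENNReal.ofReal_le_ofReal_iff (by positivity)).1 ?_
    calc ENNReal.ofReal ‖∫ x in A, f x ∂μ‖ ≤ ∫⁻ x in A, ‖f x‖ₑ ∂μ := by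
          rw [ofReal_norm]; exact enorm_integral_le_lintegral_enorm _
      _ ≤ ENNReal.ofReal (a * E.nrm f / E.nrm χ) := hbound f hf
      _ ≤ ENNReal.ofReal (a / E.nrm χ) := by gcongr; exact mul_le_of_le_one_right ha hf1

theorem mInf_apply_of_subset {A : Set ℝ} (hAsub : A ⊆ Ioi 0) : mInf A = volume A := by
  rw [mInf, Measure.restrict_apply' measurableSet_Ioi, inter_eq_self_of_subset_left hAsub]

section IndSet

variable {A : Set ℝ} (hA : MeasurableSet A)

theorem coeFn_indSet : ⇑(indSet A hA) =ᵐ[mInf] A.indicator fun _ => 1 :=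
  AEEqFun.coeFn_mk _ _

theorem norm_indSet_ae_eq : ∀ᵐ x ∂mInf, ‖indSet A hA x‖ = A.indicator 1 x := by
  filter_upwards [coeFn_indSet hA] with x hx
  by_cases hxA : x ∈ A <;> simp [hx, hxA]

theorem indSet_ne_zero (hA0 : mInf A ≠ 0) : indSet A hA ≠ 0 := by
  intro h
  have hnorm := norm_indSet_ae_eq hA
  rw [h] at hnorm
  refine hA0 (measure_eq_zero_iff_ae_notMem.2 ?_)
  filter_upwards [hnorm, AEEqFun.coeFn_zero (β := ℂ)] with x hx h0 hxA
  simp [h0, indicator_of_mem hxA] at hx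

theorem setIntegral_indSet (hAsub : A ⊆ Ioi 0) :
    ∫ x in A, indSet A hA x ∂mInf = ((volume A).toReal : ℂ) := by
  rw [integral_congr_ae (coeFn_indSet hA).restrict,
    setIntegral_congr_fun hA fun x hx => indicator_of_mem hx _, setIntegral_const,
    measureReal_def, mInf_apply_of_subset hAsub, Complex.real_smul, mul_one]

end IndSet

theorem indicator_support_functional_general
    (E : SymmetricSpace mInf) (hEs : StronglySymmetric E)
    (A : Set ℝ) (hA : MeasurableSet A) (hAsub : A ⊆ Set.Ioi 0)
    (hApos : 0 < volume A) (hAfin : volume A < ⊤)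
    (hchi : indSet A hA ∈ E.carrier) :
    (∀ f ∈ E.carrier, IntegrableOn (⇑f) A mInf) ∧
    sSup {r : ℝ | ∃ f ∈ E.carrier, E.nrm f ≤ 1 ∧ r = ‖∫ x in A, f x ∂mInf‖}
      = (volume A).toReal / E.nrm (indSet A hA) ∧
    ((E.nrm (indSet A hA) ^ 2 / (volume A).toReal : ℝ) : ℂ) * (∫ x in A, (indSet A hA) x ∂mInf)
      = ((E.nrm (indSet A hA) ^ 2 : ℝ) : ℂ) := by
  have hμA := mInf_apply_of_subset hAsub
  have hχpos : 0 < E.nrm (indSet A hA) :=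
    E.nrm_pos hchi (indSet_ne_zero hA (hμA ▸ hApos.ne'))
  have hbound : ∀ f ∈ E.carrier, ∫⁻ x in A, ‖f x‖ₑ ∂mInf
      ≤ ENNReal.ofReal ((volume A).toReal * E.nrm f / E.nrm (indSet A hA)) := fun f hf => by
    simpa only [hμA] using hEs.setLIntegral_enorm_le hA (hμA ▸ hAfin.ne) hchi
      (norm_indSet_ae_eq hA) hχpos hf
  have ha : 0 < (volume A).toReal := ENNReal.toReal_pos hApos.ne' hAfin.ne
  refine ⟨fun f hf => ⟨f.aestronglyMeasurable.restrict,
      (hbound f hf).trans_lt ENNReal.ofReal_lt_top⟩,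
    (isGreatest_norm_setIntegral hchi hχpos ha.le (setIntegral_indSet hA hAsub) hbound).csSup_eq,
    ?_⟩
  rw [setIntegral_indSet hA hAsub, ← Complex.ofReal_mul, div_mul_cancel₀ _ ha.ne']

/-- **commutative case of the support-functional proposition.**
For a nonzero strongly symmetric function space `E` on `(0,∞)` and a measurable set
`A ⊆ (0,∞)` with `0 < m(A) < ∞` and `χ_A ∈ E`: every `f ∈ E` is integrable over `A`,
`sup{ |∫_A f| : ‖f‖_E ≤ 1 } = m(A)/‖χ_A‖_E`, and the functional
`f ↦ (‖χ_A‖_E²/m(A)) ∫_A f` takes the value `‖χ_A‖_E²` at `χ_A`; i.e. it is a support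
functional of `χ_A`. -/
theorem indicator_support_functional
    (E : SymmetricSpace mInf) (hE : E.Nonzero) (hEs : StronglySymmetric E)
    (A : Set ℝ) (hA : MeasurableSet A) (hAsub : A ⊆ Set.Ioi 0)
    (hApos : 0 < volume A) (hAfin : volume A < ⊤)
    (hchi : indSet A hA ∈ E.carrier) :
    (∀ f ∈ E.carrier, IntegrableOn (⇑f) A mInf) ∧
    sSup {r : ℝ | ∃ f ∈ E.carrier, E.nrm f ≤ 1 ∧ r = ‖∫ x in A, f x ∂mInf‖}
      = (volume A).toReal / E.nrm (indSet A hA) ∧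
    ((E.nrm (indSet A hA) ^ 2 / (volume A).toReal : ℝ) : ℂ) * (∫ x in A, (indSet A hA) x ∂mInf)
      = ((E.nrm (indSet A hA) ^ 2 : ℝ) : ℂ) :=
  indicator_support_functional_general E hEs A hA hAsub hApos hAfin hchi

end SymmPaper
end
end

section
/- Let X be a real Banach space and let (x_n)_{n≥1} be a sequence in X such that for every continuous linear functional f ∈ X* the sequence (f(x_n))_n converges in ℝ. Then the sequence (x_n) converges in the ball topology b_X to at most one limit: if x_n → a in b_X and x_n → b in b_X, then a = b. -/
/-!
Suppose `x → a` and `x → b` in the ball topology. Along the iterated limit "first `m → ∞`, then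
`n → ∞`", the differences `x n - x m` converge to `e := b - a` in the ball topology, and they are
bounded (Banach–Steinhaus) and tend weakly to `0`. Ball convergence to `e` says that each closed
ball missing `e` is eventually missed; by compactness this holds uniformly along all segments
from a finite convex hull, so one can choose differences `d₀, d₁, …` whose convex hull together
with `e` avoids a closed ball around `0` of radius `‖e‖ / 2`. Since `dₖ → 0` weakly, Hahn–Banach
puts `0` in the norm closure of that convex hull, which forces `e = 0`.
-/

open Filter Topology

noncomputable section

namespace BallTop

/-- The ball topology `b_X` of a normed space: the coarsest topology in which every
norm-closed ball (of positive radius) is closed. -/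
def ballTopology (X : Type*) [NormedAddCommGroup X] : TopologicalSpace X :=
  TopologicalSpace.generateFrom
    {s : Set X | ∃ (x : X) (ε : ℝ), 0 < ε ∧ s = (Metric.closedBall x ε)ᶜ}

open Set Metric

instance _root_.Filter.curry.instNeBot {α β : Type*} {l : Filter α} {m : Filter β} [l.NeBot]
    [m.NeBot] : (l.curry m).NeBot :=
  ⟨fun h => by
    obtain ⟨_, h'⟩ := (mem_curry_iff.mp (empty_mem_iff_bot.mpr h)).exists
    exact h'.exists.choose_spec⟩

theorem mem_closure_convexHull_range_of_weak_tendsto {E ι : Type*} [AddCommGroup E]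
    [TopologicalSpace E] [IsTopologicalAddGroup E] [Module ℝ E] [ContinuousSMul ℝ E]
    [LocallyConvexSpace ℝ E] {l : Filter ι} [l.NeBot] {w : ι → E} {q : E}
    (hw : ∀ f : E →L[ℝ] ℝ, Tendsto (fun i => f (w i)) l (𝓝 (f q))) :
    q ∈ closure (convexHull ℝ (range w)) := by
  by_contra hq
  obtain ⟨f, u, hfu, huq⟩ :=
    geometric_hahn_banach_closed_point (convex_convexHull ℝ _).closure isClosed_closure hq
  have : f q ≤ u := le_of_tendsto (hw f) (Eventually.of_forall fun i =>
    (hfu _ (subset_closure (subset_convexHull ℝ _ (mem_range_self i)))).le)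
  linarith

theorem exists_norm_le_of_forall_dual_bdd {𝕜 E ι : Type*} [RCLike 𝕜]
    [NormedAddCommGroup E] [NormedSpace 𝕜 E] {x : ι → E}
    (h : ∀ f : StrongDual 𝕜 E, ∃ C, ∀ i, ‖f (x i)‖ ≤ C) : ∃ C, ∀ i, ‖x i‖ ≤ C := by
  obtain ⟨C, hC⟩ := banach_steinhaus (g := fun i => NormedSpace.inclusionInDoubleDual 𝕜 E (x i)) h
  exact ⟨C, fun i => (NormedSpace.inclusionInDoubleDualLi 𝕜).norm_map (x i) ▸ hC i⟩

section

variable {X ι : Type*} [NormedAddCommGroup X] {l : Filter ι} {y : ι → X} {p : X}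

theorem tendsto_ballTopology_iff :
    Tendsto y l (@nhds X (ballTopology X) p) ↔
      ∀ c r, r < ‖p - c‖ → ∀ᶠ i in l, r < ‖y i - c‖ := by
  rw [ballTopology, TopologicalSpace.tendsto_nhds_generateFrom_iff]
  constructor
  · intro h c r hr
    rcases lt_or_ge 0 ((r + ‖p - c‖) / 2) with hε | hε
    · have hp : p ∈ (closedBall c ((r + ‖p - c‖) / 2))ᶜ := by
        rw [mem_compl_iff, mem_closedBall, dist_eq_norm]
        linarith
      filter_upwards [h _ ⟨c, _, hε, rfl⟩ hp] with i hi
      rw [mem_preimage, mem_compl_iff, mem_closedBall, dist_eq_norm] at hi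
      linarith
    · exact Eventually.of_forall fun i => by linarith [norm_nonneg (y i - c)]
  · rintro h _ ⟨c, ε, -, rfl⟩ hp
    rw [mem_compl_iff, mem_closedBall, not_le, dist_eq_norm] at hp
    filter_upwards [h c ε hp] with i hi
    rwa [mem_preimage, mem_compl_iff, mem_closedBall, not_le, dist_eq_norm]

theorem tendsto_sub_curry_ballTopology {κ : Type*} {m : Filter κ} {z : κ → X} {q : X}
    (hy : Tendsto y l (@nhds X (ballTopology X) p))
    (hz : Tendsto z m (@nhds X (ballTopology X) q)) :
    Tendsto (fun ij : ι × κ => z ij.2 - y ij.1) (l.curry m) (@nhds X (ballTopology X) (q - p)) := by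
  rw [tendsto_ballTopology_iff] at *
  intro c r hr
  have hr' : r < ‖p - (q - c)‖ := by
    rwa [show p - (q - c) = -(q - p - c) by abel, norm_neg]
  refine eventually_curry_iff.mpr ?_
  filter_upwards [hy _ _ hr'] with i hi
  have hi' : r < ‖q - (y i + c)‖ := by
    rwa [show q - (y i + c) = -(y i - (q - c)) by abel, norm_neg]
  filter_upwards [hz _ _ hi'] with j hj
  rwa [sub_sub]

variable [NormedSpace ℝ X]

theorem eventually_lt_norm_smul_add (hy : Tendsto y l (@nhds X (ballTopology X) p)) {t r : ℝ}
    {w : X} (hr : r < ‖t • p + w‖) : ∀ᶠ i in l, r < ‖t • y i + w‖ := by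
  rcases eq_or_ne t 0 with rfl | ht
  · exact Eventually.of_forall fun i => by simpa using hr
  have key : ∀ v : X, ‖t • v + w‖ = |t| * ‖v - -(t⁻¹ • w)‖ := fun v => by
    rw [← Real.norm_eq_abs, ← norm_smul, smul_sub, smul_neg, smul_smul, mul_inv_cancel₀ ht,
      one_smul, sub_neg_eq_add]
  have ht' : 0 < |t| := abs_pos.mpr ht
  rw [key, ← div_lt_iff₀' ht'] at hr
  filter_upwards [tendsto_ballTopology_iff.mp hy _ _ hr] with i hi
  rwa [key, ← div_lt_iff₀' ht']

theorem eventually_prod_nhds_lt_norm_smul_add (hy : Tendsto y l (@nhds X (ballTopology X) p))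
    {M : ℝ} (hM : ∀ i, ‖y i‖ ≤ M) {q : ℝ × X} {r : ℝ} (hr : r < ‖q.1 • p + q.2‖) :
    ∀ᶠ z in l ×ˢ 𝓝 q, r < ‖z.2.1 • y z.1 + z.2.2‖ := by
  obtain ⟨η, hη, hrη⟩ : ∃ η > 0, r + η < ‖q.1 • p + q.2‖ :=
    ⟨(‖q.1 • p + q.2‖ - r) / 2, by linarith, by linarith⟩
  have hy' := eventually_lt_norm_smul_add hy (t := q.1) (w := q.2) (r := r + η) hrη
  have hcont : Continuous fun q' : ℝ × X => |q'.1 - q.1| * M + ‖q'.2 - q.2‖ := by fun_prop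
  have hnear : ∀ᶠ q' in 𝓝 q, |q'.1 - q.1| * M + ‖q'.2 - q.2‖ < η :=
    Tendsto.eventually_lt_const hη (by simpa using hcont.tendsto q)
  filter_upwards [hy'.prod_mk hnear] with ⟨i, t, v⟩ ⟨hi, htv⟩
  have hsplit : q.1 • y i + q.2 = (t • y i + v) - ((t - q.1) • y i + (v - q.2)) := by
    rw [sub_smul]; abel
  have hbound : ‖(t - q.1) • y i‖ ≤ |t - q.1| * M := by
    rw [norm_smul, Real.norm_eq_abs]; exact mul_le_mul_of_nonneg_left (hM i) (abs_nonneg _)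
  calc r < ‖q.1 • y i + q.2‖ - (|t - q.1| * M + ‖v - q.2‖) := by linarith
    _ ≤ ‖q.1 • y i + q.2‖ - ‖(t - q.1) • y i + (v - q.2)‖ := by
      gcongr; exact (norm_add_le _ _).trans (by gcongr)
    _ ≤ ‖t • y i + v‖ := by
      rw [sub_le_iff_le_add, hsplit]; exact norm_sub_le _ _

theorem eventually_forall_lt_norm_smul_add (hy : Tendsto y l (@nhds X (ballTopology X) p))
    {M : ℝ} (hM : ∀ i, ‖y i‖ ≤ M) {K : Set (ℝ × X)} (hK : IsCompact K) {r : ℝ}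
    (hr : ∀ q ∈ K, r < ‖q.1 • p + q.2‖) : ∀ᶠ i in l, ∀ q ∈ K, r < ‖q.1 • y i + q.2‖ := by
  have h : ∀ᶠ z in l ×ˢ 𝓝ˢ K, r < ‖z.2.1 • y z.1 + z.2.2‖ :=
    hK.mem_prod_nhdsSet_of_forall fun q hq => eventually_prod_nhds_lt_norm_smul_add hy hM (hr q hq)
  exact h.curry.mono fun _ h => h.self_of_nhdsSet

theorem eventually_disjoint_convexHull_insert (hy : Tendsto y l (@nhds X (ballTopology X) p))
    {M : ℝ} (hM : ∀ i, ‖y i‖ ≤ M) {A : Set X} (hA : A.Finite) {c : X} {r : ℝ}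
    (h : Disjoint (convexHull ℝ (insert p A)) (closedBall c r)) :
    ∀ᶠ i in l, Disjoint (convexHull ℝ (insert p (insert (y i) A))) (closedBall c r) := by
  set H := convexHull ℝ (insert p A)
  set K : Set (ℝ × X) := (fun q : ℝ × X => (q.1, (1 - q.1) • q.2 - c)) '' (Icc 0 1 ×ˢ H)
  have hK : IsCompact K :=
    (isCompact_Icc.prod ((hA.insert p).isCompact_convexHull ℝ)).image (by fun_prop)
  have hKp : ∀ q ∈ K, r < ‖q.1 • p + q.2‖ := by
    rintro _ ⟨⟨t, v⟩, ⟨ht, hv⟩, rfl⟩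
    have hmem : (1 - t) • v + t • p ∈ H := convex_convexHull ℝ (insert p A) hv
      (subset_convexHull ℝ _ (mem_insert p A)) (sub_nonneg.mpr ht.2) ht.1 (sub_add_cancel 1 t)
    have := disjoint_left.mp h hmem
    rw [mem_closedBall, not_le, dist_eq_norm] at this
    rwa [show t • p + ((1 - t) • v - c) = (1 - t) • v + t • p - c by abel]
  filter_upwards [eventually_forall_lt_norm_smul_add hy hM hK hKp] with i hi
  rw [insert_comm, convexHull_insert (insert_nonempty p A), disjoint_left]
  rintro _ hv'
  obtain ⟨_, rfl, v, hv, θ, θ', hθ, hθ', hsum, rfl⟩ := mem_convexJoin.mp hv'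
  have := hi (θ, θ' • v - c) ⟨(θ, v), ⟨⟨hθ, by linarith⟩, hv⟩, by simp [← hsum]⟩
  rw [mem_closedBall, not_le, dist_eq_norm]
  rwa [show θ • y i + θ' • v - c = θ • y i + (θ' • v - c) by abel]

theorem exists_seq_disjoint_convexHull [l.NeBot] (hy : Tendsto y l (@nhds X (ballTopology X) p))
    {M : ℝ} (hM : ∀ i, ‖y i‖ ≤ M) {B : ℕ → Set ι} (hB : ∀ k, B k ∈ l) {c : X} {r : ℝ}
    (hp : r < ‖p - c‖) :
    ∃ j : ℕ → ι, (∀ k, j k ∈ B k) ∧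
      Disjoint (convexHull ℝ (insert p (range (y ∘ j)))) (closedBall c r) := by
  let Good : Set X → Prop := fun A =>
    A.Finite ∧ Disjoint (convexHull ℝ (insert p A)) (closedBall c r)
  have step : ∀ k A, ∃ i ∈ B k, Good A → Good (insert (y i) A) := by
    intro k A
    by_cases hA : Good A
    · obtain ⟨i, hi, hgood⟩ :=
        (Eventually.and (hB k) (eventually_disjoint_convexHull_insert hy hM hA.1 hA.2)).exists
      exact ⟨i, hi, fun _ => ⟨hA.1.insert _, hgood⟩⟩
    · obtain ⟨i, hi⟩ := l.nonempty_of_mem (hB k)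
      exact ⟨i, hi, fun h => absurd h hA⟩
  choose J hJB hJ using step
  let S : ℕ → Set X := fun k => Nat.rec ∅ (fun k A => insert (y (J k A)) A) k
  have hS : ∀ k, Good (S k) := by
    intro k
    induction k with
    | zero =>
      refine ⟨finite_empty, ?_⟩
      simpa [S, mem_closedBall, dist_eq_norm] using hp
    | succ k ih => exact hJ k (S k) ih
  refine ⟨fun k => J k (S k), fun k => hJB k _, ?_⟩
  have hmono : Monotone fun k => convexHull ℝ (insert p (S k)) :=
    monotone_nat_of_le_succ fun k => convexHull_mono (insert_subset_insert (subset_insert _ _))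
  have hconv : Convex ℝ (⋃ k, convexHull ℝ (insert p (S k))) :=
    hmono.directed_le.convex_iUnion fun k => convex_convexHull ℝ _
  refine Disjoint.mono_left (convexHull_min ?_ hconv) (disjoint_iUnion_left.mpr fun k => (hS k).2)
  rintro _ (rfl | ⟨k, rfl⟩)
  · exact mem_iUnion.mpr ⟨0, subset_convexHull ℝ _ (mem_insert _ _)⟩
  · exact mem_iUnion.mpr ⟨k + 1, subset_convexHull ℝ _ (mem_insert_of_mem _ (mem_insert _ _))⟩

-- The ball limit is taken along `l`, the weak limit along a countably generated `l' ≥ l`: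
-- in the application `l = atTop.curry atTop`, which is not countably generated.
theorem eq_of_tendsto_ballTopology_of_weak_tendsto {l' : Filter ι} [l.NeBot]
    [l'.IsCountablyGenerated] (hl : l ≤ l') {M : ℝ} (hM : ∀ i, ‖y i‖ ≤ M)
    (hy : Tendsto y l (@nhds X (ballTopology X) p)) {q : X}
    (hw : ∀ f : X →L[ℝ] ℝ, Tendsto (fun i => f (y i)) l' (𝓝 (f q))) : p = q := by
  by_contra hne
  have hpq : 0 < ‖p - q‖ := by simpa [sub_eq_zero] using hne
  obtain ⟨B, hB⟩ := l'.exists_antitone_basis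
  obtain ⟨j, hjB, hdisj⟩ :=
    exists_seq_disjoint_convexHull hy hM (fun k => hl (hB.mem k)) (half_lt_self hpq)
  have hq : q ∈ closure (convexHull ℝ (range (y ∘ j))) :=
    mem_closure_convexHull_range_of_weak_tendsto fun f => (hw f).comp (hB.tendsto hjB)
  obtain ⟨v, hv, hvq⟩ := Metric.mem_closure_iff.mp hq _ (half_pos hpq)
  refine disjoint_left.mp hdisj (convexHull_mono (subset_insert _ _) hv) ?_
  rw [mem_closedBall, dist_comm]
  exact hvq.le

end

theorem ball_topology_unique_limit_general
    {X : Type*} [NormedAddCommGroup X] [NormedSpace ℝ X]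
    (x : ℕ → X)
    (hweak : ∀ f : X →L[ℝ] ℝ, ∃ L : ℝ, Tendsto (fun n => f (x n)) atTop (nhds L))
    (a b : X)
    (ha : Tendsto x atTop (@nhds X (ballTopology X) a))
    (hb : Tendsto x atTop (@nhds X (ballTopology X) b)) :
    a = b := by
  obtain ⟨M, hM⟩ := exists_norm_le_of_forall_dual_bdd fun f : X →L[ℝ] ℝ =>
    have ⟨_, hL⟩ := hweak f
    have ⟨C, hC⟩ := hL.norm.bddAbove_range
    ⟨C, fun n => hC (mem_range_self n)⟩
  have hdiff_weak : ∀ f : X →L[ℝ] ℝ,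
      Tendsto (fun mn : ℕ × ℕ => f (x mn.2 - x mn.1)) (atTop ×ˢ atTop) (𝓝 (f 0)) := by
    intro f
    obtain ⟨L, hL⟩ := hweak f
    simpa using (hL.comp tendsto_snd).sub (hL.comp tendsto_fst)
  have := eq_of_tendsto_ballTopology_of_weak_tendsto curry_le_prod
    (fun mn => (norm_sub_le _ _).trans (add_le_add (hM mn.2) (hM mn.1)))
    (tendsto_sub_curry_ballTopology ha hb) hdiff_weak
  exact (sub_eq_zero.mp this).symm

/-- In a real Banach space, a sequence whose images under every continuous
linear functional converge has at most one limit in the ball topology. -/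
theorem ball_topology_unique_limit
    {X : Type*} [NormedAddCommGroup X] [NormedSpace ℝ X] [CompleteSpace X]
    (x : ℕ → X)
    (hweak : ∀ f : X →L[ℝ] ℝ, ∃ L : ℝ, Tendsto (fun n => f (x n)) atTop (nhds L))
    (a b : X)
    (ha : Tendsto x atTop (@nhds X (ballTopology X) a))
    (hb : Tendsto x atTop (@nhds X (ballTopology X) b)) :
    a = b :=
  ball_topology_unique_limit_general x hweak a b ha hb

end BallTop
end
end

section
/- Let X be a real Banach space and let (x_n)_{n≥1} be a sequence in X such that for every continuous linear functional f ∈ X* the sequence (f(x_n))_n converges in ℝ. Then every sequence (y_k)_{k≥1} whose terms lie in the absolutely convex hull of the set {x_n : n ≥ 1} admits a subsequence (y_{k_j})_j such that (f(y_{k_j}))_j converges in ℝ for every f ∈ X*. In other words, the absolutely convex hull of a weakly Cauchy sequence is a Rosenthal set: every sequence in it has a weakly Cauchy subsequence. -/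
open Filter Topology

namespace BallTop

/-! Write each `y k` as `∑ₘ aₖ(m) • x m` with `aₖ` finitely supported in the unit ball of `ℓ¹`.
Compactness of `[-1, 1]^ℕ × [-1, 1]` gives a subsequence along which every coefficient `aₖ(m)` and
the total mass `∑ₘ aₖ(m)` converge. If `f (x m) → L`, then
`f (y k) = ∑ₘ aₖ(m) (f (x m) - L) + L ∑ₘ aₖ(m)`, and since only finitely many `m` have
`|f (x m) - L| > ε`, the first sum is uniformly `ε`-close to a convergent finite sum. -/

theorem cauchySeq_of_forall_dist_le_of_cauchySeq {α β : Type*} [PseudoMetricSpace α]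
    [Nonempty β] [SemilatticeSup β] {u : β → α}
    (h : ∀ ε > 0, ∃ v : β → α, CauchySeq v ∧ ∀ k, dist (u k) (v k) ≤ ε) : CauchySeq u := by
  refine Metric.cauchySeq_iff.2 fun ε hε => ?_
  obtain ⟨v, hv, huv⟩ := h (ε / 4) (by positivity)
  obtain ⟨N, hN⟩ := Metric.cauchySeq_iff.1 hv (ε / 2) (by positivity)
  refine ⟨N, fun m hm n hn => ?_⟩
  have hm' := huv m
  have hn' := dist_comm (u n) (v n) ▸ huv n
  linarith [dist_triangle4 (u m) (v m) (v n) (u n), hN m hm n hn]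

section LinearCombination

variable {ι : Type*}

theorem abs_sum_mul_le {S : Finset ι} {a t : ι → ℝ} {ε : ℝ} (ha : ∑ m ∈ S, |a m| ≤ 1)
    (hε : 0 ≤ ε) (ht : ∀ m ∈ S, |t m| ≤ ε) : |∑ m ∈ S, a m * t m| ≤ ε :=
  calc |∑ m ∈ S, a m * t m| ≤ ∑ m ∈ S, |a m| * ε := by
        refine (Finset.abs_sum_le_sum_abs _ _).trans (Finset.sum_le_sum fun m hm => ?_)
        rw [abs_mul]
        exact mul_le_mul_of_nonneg_left (ht m hm) (abs_nonneg _)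
    _ ≤ 1 * ε := by rw [← Finset.sum_mul]; exact mul_le_mul_of_nonneg_right ha hε
    _ = ε := one_mul ε

theorem cauchySeq_linearCombination_of_tendsto_zero (a : ℕ → ι →₀ ℝ)
    (ha : ∀ k (S : Finset ι), ∑ m ∈ S, |a k m| ≤ 1)
    (hcoord : ∀ m, ∃ p, Tendsto (fun k => a k m) atTop (𝓝 p))
    {t : ι → ℝ} (ht : Tendsto t cofinite (𝓝 0)) :
    CauchySeq fun k => Finsupp.linearCombination ℝ t (a k) := by
  classical
  refine cauchySeq_of_forall_dist_le_of_cauchySeq fun ε hε => ?_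
  obtain ⟨F, hF⟩ : ∃ F : Finset ι, ∀ m ∉ F, |t m| ≤ ε := by
    have hfin := eventually_cofinite.1 (ht.eventually (eventually_abs_sub_lt 0 hε))
    exact ⟨hfin.toFinset, fun m hm => by simpa using (not_not.1 (hfin.mem_toFinset.not.1 hm)).le⟩
  choose p hp using hcoord
  refine ⟨fun k => ∑ m ∈ F, a k m * t m,
    (tendsto_finsetSum F fun m _ => (hp m).mul_const (t m)).cauchySeq, fun k => ?_⟩
  have hsplit : Finsupp.linearCombination ℝ t (a k) =
      ∑ m ∈ F, a k m * t m + ∑ m ∈ (a k).support.filter (· ∉ F), a k m * t m := by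
    rw [Finsupp.linearCombination_apply, Finsupp.sum,
      ← Finset.sum_filter_add_sum_filter_not _ (· ∈ F)]
    congr 1
    refine Finset.sum_subset (fun m hm => (Finset.mem_filter.1 hm).2) fun m hmF hm => ?_
    rw [Finsupp.notMem_support_iff.1 fun h => hm (Finset.mem_filter.2 ⟨h, hmF⟩), zero_smul]
  rw [Real.dist_eq, hsplit, add_sub_cancel_left]
  exact abs_sum_mul_le (ha k _) hε.le fun m hm => hF m (Finset.mem_filter.1 hm).2

theorem cauchySeq_linearCombination_of_tendsto (a : ℕ → ι →₀ ℝ)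
    (ha : ∀ k (S : Finset ι), ∑ m ∈ S, |a k m| ≤ 1)
    (hcoord : ∀ m, ∃ p, Tendsto (fun k => a k m) atTop (𝓝 p))
    (hmass : ∃ τ, Tendsto (fun k => (a k).sum fun _ r => r) atTop (𝓝 τ))
    {t : ι → ℝ} {L : ℝ} (ht : Tendsto t cofinite (𝓝 L)) :
    CauchySeq fun k => Finsupp.linearCombination ℝ t (a k) := by
  obtain ⟨τ, hτ⟩ := hmass
  have hdecomp : ∀ k, Finsupp.linearCombination ℝ t (a k) =
      Finsupp.linearCombination ℝ (fun m => t m - L) (a k) + L * (a k).sum fun _ r => r := by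
    intro k
    simp only [Finsupp.linearCombination_apply, Finsupp.sum, smul_eq_mul, Finset.mul_sum,
      ← Finset.sum_add_distrib]
    exact Finset.sum_congr rfl fun m _ => by ring
  simp_rw [hdecomp]
  exact (cauchySeq_linearCombination_of_tendsto_zero a ha hcoord
    (by simpa using ht.sub_const L)).add (hτ.const_mul L).cauchySeq

theorem exists_strictMono_tendsto_coeff [Countable ι] (a : ℕ → ι →₀ ℝ)
    (ha : ∀ k (S : Finset ι), ∑ m ∈ S, |a k m| ≤ 1) :
    ∃ φ : ℕ → ℕ, StrictMono φ ∧ (∀ m, ∃ p, Tendsto (fun j => a (φ j) m) atTop (𝓝 p)) ∧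
      ∃ τ, Tendsto (fun j => (a (φ j)).sum fun _ r => r) atTop (𝓝 τ) := by
  have hcoord : ∀ k m, a k m ∈ Set.Icc (-1 : ℝ) 1 := fun k m =>
    abs_le.1 (by simpa using ha k {m})
  have hmass : ∀ k, ((a k).sum fun _ r => r) ∈ Set.Icc (-1 : ℝ) 1 := fun k =>
    abs_le.1 ((Finset.abs_sum_le_sum_abs _ _).trans (ha k _))
  obtain ⟨p, -, φ, hφ, hlim⟩ :=
    ((isCompact_univ_pi fun _ => isCompact_Icc).prod isCompact_Icc).tendsto_subseq
      (x := fun k => (⇑(a k), (a k).sum fun _ r => r)) fun k =>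
        ⟨fun m _ => hcoord k m, hmass k⟩
  exact ⟨φ, hφ, fun m => ⟨p.1 m, tendsto_pi_nhds.1 ((continuous_fst.tendsto p).comp hlim) m⟩,
    p.2, (continuous_snd.tendsto p).comp hlim⟩

theorem sum_abs_sum_single_le {κ : Type*} (s : Finset κ) (c : κ → ℝ) (idx : κ → ι)
    (S : Finset ι) : ∑ m ∈ S, |(∑ i ∈ s, Finsupp.single (idx i) (c i)) m| ≤ ∑ i ∈ s, |c i| := by
  classical
  calc ∑ m ∈ S, |(∑ i ∈ s, Finsupp.single (idx i) (c i)) m|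
      ≤ ∑ m ∈ S, ∑ i ∈ s, |Finsupp.single (idx i) (c i) m| := by
        gcongr with m
        rw [Finsupp.finsetSum_apply]
        exact Finset.abs_sum_le_sum_abs _ _
    _ = ∑ i ∈ s, ∑ m ∈ S, |Finsupp.single (idx i) (c i) m| := Finset.sum_comm
    _ ≤ ∑ i ∈ s, |c i| := by
        gcongr with i
        simp only [Finsupp.single_apply, apply_ite, abs_zero, Finset.sum_ite_eq]
        split_ifs <;> simp

end LinearCombination

theorem absConvHull_weaklyCauchy_rosenthal_general
    {X : Type*} [NormedAddCommGroup X] [NormedSpace ℝ X]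
    (x : ℕ → X)
    (hweak : ∀ f : X →L[ℝ] ℝ, ∃ L : ℝ, Tendsto (fun n => f (x n)) atTop (nhds L))
    (y : ℕ → X)
    (hy : ∀ k, ∃ (n : ℕ) (c : Fin n → ℝ) (idx : Fin n → ℕ),
      (∑ i, |c i|) ≤ 1 ∧ y k = ∑ i, c i • x (idx i)) :
    ∃ φ : ℕ → ℕ, StrictMono φ ∧
      ∀ f : X →L[ℝ] ℝ, ∃ L : ℝ, Tendsto (fun j => f (y (φ j))) atTop (nhds L) := by
  choose n c idx hc hrep using hy
  set a : ℕ → ℕ →₀ ℝ := fun k => ∑ i, Finsupp.single (idx k i) (c k i)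
  have ha : ∀ k S, ∑ m ∈ S, |a k m| ≤ 1 := fun k S =>
    (sum_abs_sum_single_le _ _ _ S).trans (hc k)
  obtain ⟨φ, hφ, hcoord, hmass⟩ := exists_strictMono_tendsto_coeff a ha
  refine ⟨φ, hφ, fun f => ?_⟩
  obtain ⟨L, hL⟩ := hweak f
  have hfy : ∀ k, f (y k) = Finsupp.linearCombination ℝ (f ∘ x) (a k) := fun k => by
    simp [a, hrep k, map_sum]
  simp_rw [hfy]
  exact cauchySeq_tendsto_of_complete <| cauchySeq_linearCombination_of_tendsto (a ∘ φ)
    (fun k => ha (φ k)) hcoord hmass (Nat.cofinite_eq_atTop ▸ hL)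

/-- In a real Banach space, the absolutely convex hull of a weakly Cauchy
sequence is a Rosenthal set: every sequence in it has a weakly Cauchy subsequence. -/
theorem absConvHull_weaklyCauchy_rosenthal
    {X : Type*} [NormedAddCommGroup X] [NormedSpace ℝ X] [CompleteSpace X]
    (x : ℕ → X)
    (hweak : ∀ f : X →L[ℝ] ℝ, ∃ L : ℝ, Tendsto (fun n => f (x n)) atTop (nhds L))
    (y : ℕ → X)
    (hy : ∀ k, ∃ (n : ℕ) (c : Fin n → ℝ) (idx : Fin n → ℕ),
      (∑ i, |c i|) ≤ 1 ∧ y k = ∑ i, c i • x (idx i)) :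
    ∃ φ : ℕ → ℕ, StrictMono φ ∧
      ∀ f : X →L[ℝ] ℝ, ∃ L : ℝ, Tendsto (fun j => f (y (φ j))) atTop (nhds L) :=
  absConvHull_weaklyCauchy_rosenthal_general x hweak y hy

end BallTop
end

section
/- Equip L_1(0,1) (complex-valued integrable functions on (0,1) with Lebesgue measure) with the norm ‖f‖ = ∫_0^{1/2} μ(s; f) ds, where μ(·; f) is the decreasing rearrangement of f. Let a : (0,1) → [0,∞) be measurable and let σ : (0,1) → (0,1) be a Borel bijection with Borel inverse such that preimages under σ of Lebesgue-null sets are null (so that f ↦ f ∘ σ is well defined on a.e.-equivalence classes). If the map T defined by (Tf)(t) = a(t)·f(σ(t)) maps L_1(0,1) onto L_1(0,1) and satisfies ‖Tf‖ = ‖f‖ for all f ∈ L_1(0,1), then a = 1 almost everywhere. -/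
/-!
By the layer cake formula, `‖f‖ = ∫_0^∞ min(d_f(s), 1/2) ds` with `d_f(s) = m{|f| > s}`, so `‖f‖`
is the `L₁`-norm whenever `f` vanishes off a set of measure `≤ 1/2`. As `σ` is null-preserving,
the image of `m` under `σ` is absolutely continuous, so `(0,1)` splits into intervals `E` so short
that `E` and `σ⁻¹ E` both have measure `< 1/2`; the isometry applied to `1_E` then gives
`∫_{σ⁻¹ E} a = m(E)`, and summing over the intervals, `∫ a = 1`. Applied to `1` it gives
`‖a‖ = 1/2`, i.e. `∫ min(d_a, 1/2) = 1/2 = ∫ d_a / 2`. Since `d_a ≤ 1`, this forces `d_a ∈ {0, 1}`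
almost everywhere, so `a` is a.e. constant, and `∫ a = 1` makes the constant `1`.
-/

open MeasureTheory Filter Set Topology
open scoped ENNReal

noncomputable section

namespace RenormedL1

/-- Lebesgue measure on the interval `(0,1)`. -/
def m01 : Measure ℝ := volume.restrict (Set.Ioo 0 1)

/-- The distribution function `s ↦ m{ |f| > s }` of a function on `(0,1)`. -/
def distrib01 (f : ℝ → ℂ) (s : ℝ) : ℝ≥0∞ :=
  m01 {x | s < ‖f x‖}

/-- The decreasing rearrangement `μ(t; f) = inf{ s ≥ 0 : m{|f| > s} ≤ t }`. -/
def rearr01 (f : ℝ → ℂ) (t : ℝ) : ℝ :=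
  sInf {s : ℝ | 0 ≤ s ∧ distrib01 f s ≤ ENNReal.ofReal t}

/-- The symmetric norm `‖f‖ = ∫_0^{1/2} μ(s; f) ds` on `L_1(0,1)`. -/
def nrmHalf (f : ℝ → ℂ) : ℝ :=
  ∫ s in Set.Ioo (0 : ℝ) (1 / 2), rearr01 f s

instance : IsProbabilityMeasure m01 := ⟨by simp [m01]⟩

lemma distrib01_antitone (f : ℝ → ℂ) : Antitone (distrib01 f) :=
  fun _ _ h => measure_mono fun _ hx => lt_of_le_of_lt h hx

lemma distrib01_le_one (f : ℝ → ℂ) (s : ℝ) : distrib01 f s ≤ 1 := prob_le_one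

lemma distrib01_ne_top (f : ℝ → ℂ) (s : ℝ) : distrib01 f s ≠ ∞ := measure_ne_top _ _

lemma distrib01_eq_iSup (f : ℝ → ℂ) (s : ℝ) :
    distrib01 f s = ⨆ n : ℕ, distrib01 f (s + 1 / (n + 1)) := by
  have hmono : Monotone fun n : ℕ => {x | s + 1 / ((n : ℝ) + 1) < ‖f x‖} :=
    fun _ _ hmn _ hx => (add_le_add_right (Nat.one_div_le_one_div hmn) s).trans_lt hx
  have hunion : {x | s < ‖f x‖} = ⋃ n : ℕ, {x | s + 1 / ((n : ℝ) + 1) < ‖f x‖} := by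
    ext x
    simp only [mem_ofPred_eq, mem_iUnion]
    refine ⟨fun hx => ?_, fun ⟨_, hn⟩ => (lt_add_of_pos_right s Nat.one_div_pos_of_nat).trans hn⟩
    obtain ⟨n, hn⟩ := exists_nat_one_div_lt (sub_pos.2 hx)
    exact ⟨n, by linarith⟩
  rw [distrib01, hunion, hmono.measure_iUnion]
  rfl

lemma rearr01_set_nonempty {f : ℝ → ℂ} (hf : Measurable f) {t : ℝ} (ht : 0 < t) :
    {s | 0 ≤ s ∧ distrib01 f s ≤ ENNReal.ofReal t}.Nonempty := by
  have hanti : Antitone fun n : ℕ => {x | (n : ℝ) < ‖f x‖} :=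
    fun _ _ hmn => ofPred_subset_ofPred.2 fun _ hx => (Nat.cast_le.2 hmn).trans_lt hx
  have hinter : ⋂ n : ℕ, {x | (n : ℝ) < ‖f x‖} = ∅ :=
    eq_empty_of_forall_notMem fun x hx =>
      (exists_nat_ge ‖f x‖).elim fun n hn => (mem_iInter.1 hx n).not_ge hn
  have hlim := hanti.measure_iInter (μ := m01)
    (fun n => (measurableSet_lt measurable_const hf.norm).nullMeasurableSet)
    ⟨0, measure_ne_top _ _⟩
  rw [hinter, measure_empty] at hlim
  obtain ⟨n, hn⟩ := iInf_lt_iff.1 (hlim.symm ▸ ENNReal.ofReal_pos.2 ht)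
  exact ⟨n, n.cast_nonneg, hn.le⟩

lemma lt_rearr01_iff {f : ℝ → ℂ} (hf : Measurable f) {t s : ℝ} (ht : 0 < t) (hs : 0 ≤ s) :
    s < rearr01 f t ↔ ENNReal.ofReal t < distrib01 f s := by
  have hbdd : BddBelow {s | 0 ≤ s ∧ distrib01 f s ≤ ENNReal.ofReal t} := ⟨0, fun _ h => h.1⟩
  refine ⟨fun h => lt_of_not_ge fun hle => (csInf_le hbdd ⟨hs, hle⟩).not_gt h, fun h => ?_⟩
  rw [distrib01_eq_iSup] at h
  obtain ⟨n, hn⟩ := lt_iSup_iff.1 h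
  have hgap : s + 1 / (n + 1) ≤ rearr01 f t :=
    le_csInf (rearr01_set_nonempty hf ht) fun b hb => le_of_not_gt fun hbs =>
      hb.2.not_gt (hn.trans_le (distrib01_antitone f hbs.le))
  exact (lt_add_of_pos_right s Nat.one_div_pos_of_nat).trans_le hgap

lemma rearr01_nonneg (f : ℝ → ℂ) (t : ℝ) : 0 ≤ rearr01 f t :=
  Real.sInf_nonneg fun _ h => h.1

lemma rearr01_antitoneOn {f : ℝ → ℂ} (hf : Measurable f) : AntitoneOn (rearr01 f) (Ioi 0) :=
  fun _ ht _ _ htt' => csInf_le_csInf ⟨0, fun _ h => h.1⟩ (rearr01_set_nonempty hf ht)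
    fun _ h => ⟨h.1, h.2.trans (ENNReal.ofReal_le_ofReal htt')⟩

lemma aemeasurable_rearr01 {f : ℝ → ℂ} (hf : Measurable f) :
    AEMeasurable (rearr01 f) (volume.restrict (Ioo 0 (1 / 2))) :=
  aemeasurable_restrict_of_antitoneOn measurableSet_Ioo
    ((rearr01_antitoneOn hf).mono fun _ ht => ht.1)

-- Layer cake for `μ(·; f)` on `(0, 1/2)`: its superlevel set `{t | s < μ(t; f)}` is `(0, d_f(s))`.
lemma lintegral_rearr01 {f : ℝ → ℂ} (hf : Measurable f) :
    ∫⁻ t in Ioo 0 (1 / 2), ENNReal.ofReal (rearr01 f t)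
      = ∫⁻ s in Ioi 0, min (distrib01 f s) 2⁻¹ := by
  rw [lintegral_eq_lintegral_meas_lt _ (ae_of_all _ (rearr01_nonneg f)) (aemeasurable_rearr01 hf)]
  refine setLIntegral_congr_fun measurableSet_Ioi fun s hs => ?_
  have hlevel : {t | s < rearr01 f t} ∩ Ioo 0 (1 / 2)
      = Ioo 0 (min (1 / 2) (distrib01 f s).toReal) := by
    ext t
    simp only [mem_inter_iff, mem_ofPred_eq, mem_Ioo, lt_min_iff]
    refine ⟨fun ⟨h, ht0, ht⟩ => ⟨ht0, ht, ?_⟩, fun ⟨ht0, ht, h⟩ => ⟨?_, ht0, ht⟩⟩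
    · rwa [lt_rearr01_iff hf ht0 hs.le,
        ENNReal.ofReal_lt_iff_lt_toReal ht0.le (distrib01_ne_top f s)] at h
    · rwa [lt_rearr01_iff hf ht0 hs.le,
        ENNReal.ofReal_lt_iff_lt_toReal ht0.le (distrib01_ne_top f s)]
  rw [Measure.restrict_apply' measurableSet_Ioo, hlevel, Real.volume_Ioo, sub_zero,
    ENNReal.ofReal_min, ENNReal.ofReal_toReal (distrib01_ne_top f s), min_comm]
  simp

lemma nrmHalf_eq_lintegral_min_distrib01 {f : ℝ → ℂ} (hf : Measurable f) :
    nrmHalf f = (∫⁻ s in Ioi 0, min (distrib01 f s) 2⁻¹).toReal := by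
  rw [← lintegral_rearr01 hf, nrmHalf, integral_eq_lintegral_of_nonneg_ae
    (ae_of_all _ (rearr01_nonneg f)) (aemeasurable_rearr01 hf).aestronglyMeasurable]

lemma lintegral_distrib01 {f : ℝ → ℂ} (hf : Measurable f) :
    ∫⁻ s in Ioi 0, distrib01 f s = ∫⁻ x, ‖f x‖ₑ ∂m01 := by
  simp_rw [← ofReal_norm]
  exact (lintegral_eq_lintegral_meas_lt m01 (ae_of_all _ fun x => norm_nonneg (f x))
    hf.norm.aemeasurable).symm

lemma nrmHalf_eq_lintegral_enorm_of_measure_support_le {f : ℝ → ℂ} (hf : Measurable f)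
    (h : m01 (Function.support f) ≤ 2⁻¹) : nrmHalf f = (∫⁻ x, ‖f x‖ₑ ∂m01).toReal := by
  have hsupp : distrib01 f 0 = m01 (Function.support f) := by
    simp [distrib01, Function.support]
  rw [nrmHalf_eq_lintegral_min_distrib01 hf, ← lintegral_distrib01 hf]
  refine congrArg _ (setLIntegral_congr_fun measurableSet_Ioi fun s hs => ?_)
  exact min_eq_left ((distrib01_antitone f (le_of_lt hs)).trans (hsupp ▸ h))

lemma nrmHalf_one : nrmHalf 1 = 1 / 2 := by
  have hrearr : ∀ t ∈ Ioo (0 : ℝ) (1 / 2), rearr01 1 t = 1 := by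
    intro t ht
    have hset : {s | 0 ≤ s ∧ distrib01 1 s ≤ ENNReal.ofReal t} = Ici 1 := by
      ext s
      by_cases hs : s < 1
      · have : ¬ distrib01 1 s ≤ ENNReal.ofReal t := by
          simpa [distrib01, hs] using ht.2.trans one_half_lt_one
        simp [hs, this]
      · simpa [distrib01, hs] using iff_of_true (by linarith) (not_lt.1 hs)
    rw [rearr01, hset, csInf_Ici]
  rw [nrmHalf, setIntegral_congr_fun measurableSet_Ioo hrearr]
  simp

lemma ae_distrib01_eq_zero_or_one {f : ℝ → ℂ} (hf : Measurable f)
    (hL1 : ∫⁻ x, ‖f x‖ₑ ∂m01 = 1) (hhalf : nrmHalf f = 1 / 2) :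
    ∀ᵐ s ∂volume.restrict (Ioi 0), distrib01 f s = 0 ∨ distrib01 f s = 1 := by
  set d := distrib01 f
  have hd : ∫⁻ s in Ioi 0, d s = 1 := (lintegral_distrib01 hf).trans hL1
  have hmin : ∫⁻ s in Ioi 0, min (d s) 2⁻¹ = 2⁻¹ := by
    have hfin : ∫⁻ s in Ioi 0, min (d s) 2⁻¹ ≠ ∞ :=
      ne_top_of_le_ne_top (hd ▸ ENNReal.one_ne_top) (lintegral_mono fun _ => min_le_left _ _)
    rw [nrmHalf_eq_lintegral_min_distrib01 hf,
      ← ENNReal.toReal_ofReal (by norm_num : (0 : ℝ) ≤ 1 / 2)] at hhalf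
    simpa using (ENNReal.toReal_eq_toReal_iff' hfin ENNReal.ofReal_ne_top).1 hhalf
  -- `d ≤ 1` forces `d ≤ 2 min(d, 1/2)`, and both sides have integral `1`.
  have hle : ∀ s, d s ≤ 2 * min (d s) 2⁻¹ := by
    intro s
    rcases le_total (d s) 2⁻¹ with h | h
    · rw [min_eq_left h]
      exact le_mul_of_one_le_left' one_le_two
    · rw [min_eq_right h, ENNReal.mul_inv_cancel two_ne_zero ENNReal.ofNat_ne_top]
      exact distrib01_le_one f s
  have heq : d =ᵐ[volume.restrict (Ioi 0)] fun s => 2 * min (d s) 2⁻¹ :=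
    ae_eq_of_ae_le_of_lintegral_le (ae_of_all _ hle) (hd ▸ ENNReal.one_ne_top)
      (((distrib01_antitone f).measurable.min measurable_const).const_mul 2).aemeasurable
      (by rw [lintegral_const_mul _ ((distrib01_antitone f).measurable.min measurable_const), hmin,
        ENNReal.mul_inv_cancel two_ne_zero ENNReal.ofNat_ne_top, hd])
  filter_upwards [heq] with s hs
  rcases le_total (d s) 2⁻¹ with h | h
  · rw [min_eq_left h] at hs
    refine .inl ((ENNReal.add_right_inj (distrib01_ne_top f s)).1 ?_).symm
    rw [add_zero, ← two_mul]
    exact hs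
  · rw [min_eq_right h, ENNReal.mul_inv_cancel two_ne_zero ENNReal.ofNat_ne_top] at hs
    exact .inr hs

section Dichotomy

variable {d : ℝ → ℝ≥0∞} (hd : Antitone d)
  (h01 : ∀ᵐ s ∂volume.restrict (Ioi 0), d s = 0 ∨ d s = 1) (hint : ∫⁻ s in Ioi 0, d s = 1)
include hd h01 hint

lemma antitone_eq_one_of_ae_eq_zero_or_one (hd1 : ∀ s, d s ≤ 1) {s : ℝ} (hs : s ∈ Ioo 0 1) :
    d s = 1 := by
  by_contra hne
  have hzero : ∀ᵐ x ∂volume.restrict (Ioi s), d x = 0 := by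
    filter_upwards [ae_restrict_of_ae_restrict_of_subset (Ioi_subset_Ioi hs.1.le) h01,
      ae_restrict_mem measurableSet_Ioi] with x hx hxs
    exact hx.resolve_right fun h1 => hne (le_antisymm (hd1 s) (h1 ▸ hd (le_of_lt hxs)))
  have : ∫⁻ x in Ioi 0, d x ≤ ENNReal.ofReal s :=
    calc ∫⁻ x in Ioi 0, d x
        ≤ (∫⁻ x in Ioc 0 s, d x) + ∫⁻ x in Ioi s, d x := by
          rw [← Ioc_union_Ioi_eq_Ioi hs.1.le]; exact lintegral_union_le _ _ _
      _ ≤ (∫⁻ _ in Ioc 0 s, 1) + 0 := by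
          gcongr
          · exact hd1 _
          · exact (lintegral_congr_ae hzero).trans_le (by simp)
      _ = ENNReal.ofReal s := by simp
  rw [hint, ENNReal.one_le_ofReal] at this
  exact this.not_gt hs.2

lemma antitone_eq_zero_of_ae_eq_zero_or_one {s : ℝ} (hs : 1 < s) : d s = 0 := by
  by_contra hne
  have hone : ∀ᵐ x ∂volume.restrict (Ioo 0 s), d x = 1 := by
    filter_upwards [ae_restrict_of_ae_restrict_of_subset Ioo_subset_Ioi_self h01,
      ae_restrict_mem measurableSet_Ioo] with x hx hxs
    exact hx.resolve_left fun h0 => hne (le_antisymm (h0 ▸ hd hxs.2.le) zero_le)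
  have : ENNReal.ofReal s ≤ ∫⁻ x in Ioi 0, d x :=
    calc ENNReal.ofReal s = ∫⁻ x in Ioo 0 s, d x := by
          rw [lintegral_congr_ae hone]; simp
      _ ≤ ∫⁻ x in Ioi 0, d x := lintegral_mono_set Ioo_subset_Ioi_self
  rw [hint, ENNReal.ofReal_le_one] at this
  exact this.not_gt hs

end Dichotomy

lemma ae_norm_eq_one_of_nrmHalf_eq_half {f : ℝ → ℂ} (hf : Measurable f)
    (hL1 : ∫⁻ x, ‖f x‖ₑ ∂m01 = 1) (hhalf : nrmHalf f = 1 / 2) : ∀ᵐ x ∂m01, ‖f x‖ = 1 := by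
  have h01 := ae_distrib01_eq_zero_or_one hf hL1 hhalf
  have hint := (lintegral_distrib01 hf).trans hL1
  have hupper : ∀ q : ℚ, ∀ᵐ x ∂m01, 1 < (q : ℝ) → ‖f x‖ ≤ q := by
    intro q
    by_cases hq : 1 < (q : ℝ)
    · have := antitone_eq_zero_of_ae_eq_zero_or_one (distrib01_antitone f) h01 hint hq
      exact (measure_eq_zero_iff_ae_notMem.1 this).mono fun _ hx _ => not_lt.1 hx
    · exact ae_of_all _ fun _ h => absurd h hq
  have hlower : ∀ q : ℚ, ∀ᵐ x ∂m01, (q : ℝ) < 1 → (q : ℝ) ≤ ‖f x‖ := by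
    intro q
    by_cases hq : (q : ℝ) ∈ Ioo 0 1
    · have := antitone_eq_one_of_ae_eq_zero_or_one (distrib01_antitone f) h01 hint
        (distrib01_le_one f) hq
      exact ((ae_iff_measure_eq (measurableSet_lt measurable_const hf.norm).nullMeasurableSet).2
        (this.trans measure_univ.symm)).mono fun _ hx _ => hx.le
    · exact ae_of_all _ fun _ h1 => le_of_not_gt fun h => hq ⟨(norm_nonneg _).trans_lt h, h1⟩
  filter_upwards [ae_all_iff.2 hupper, ae_all_iff.2 hlower] with x hup hlo
  exact le_antisymm (le_of_forall_lt_rat_imp_le hup) (le_of_forall_rat_lt_imp_le hlo)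

lemma _root_.MeasureTheory.Measure.AbsolutelyContinuous.exists_pos_forall_measure_lt
    {α : Type*} [MeasurableSpace α] {μ ν : Measure α} [IsFiniteMeasure ν] [SigmaFinite μ]
    (h : ν ≪ μ) {ε : ℝ≥0∞} (hε : ε ≠ 0) : ∃ δ > 0, ∀ s, μ s < δ → ν s < ε := by
  have hfin : ∫⁻ x, ν.rnDeriv μ x ∂μ ≠ ∞ := by
    rw [Measure.lintegral_rnDeriv h]
    exact measure_ne_top _ _
  obtain ⟨δ, hδ, hsmall⟩ := exists_pos_setLIntegral_lt_of_measure_lt hfin hε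
  exact ⟨δ, hδ, fun s hs => Measure.setLIntegral_rnDeriv h s ▸ hsmall s hs⟩

lemma measure_eq_of_forall_volume_le {μ ν : Measure ℝ} {s : Set ℝ} (hs : MeasurableSet s)
    {δ : ℝ} (hδ : 0 < δ)
    (h : ∀ E ⊆ s, MeasurableSet E → volume E ≤ ENNReal.ofReal δ → μ E = ν E) : μ s = ν s := by
  set E : ℤ → Set ℝ := fun n => Ico (n • δ) ((n + 1) • δ) ∩ s
  have hunion : ⋃ n, E n = s := by rw [← iUnion_inter, iUnion_Ico_zsmul hδ, univ_inter]
  have hdisj : Pairwise (Function.onFun Disjoint E) := fun i j hij =>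
    (Set.pairwise_disjoint_Ico_zsmul δ hij).mono inter_subset_left inter_subset_left
  have hmeas (n : ℤ) : MeasurableSet (E n) := measurableSet_Ico.inter hs
  have hvol (n : ℤ) : volume (E n) ≤ ENNReal.ofReal δ := by
    refine (measure_mono inter_subset_left).trans_eq ?_
    rw [Real.volume_Ico, add_smul, one_smul, add_sub_cancel_left]
  rw [← hunion, measure_iUnion hdisj hmeas, measure_iUnion hdisj hmeas]
  exact tsum_congr fun n => h _ inter_subset_right (hmeas n) (hvol n)

lemma map_m01_absolutelyContinuous {σ : ℝ → ℝ} (hσ : Measurable σ)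
    (hmapsTo : MapsTo σ (Ioo 0 1) (Ioo 0 1))
    (hnull : ∀ N : Set ℝ, N ⊆ Ioo 0 1 → MeasurableSet N → volume N = 0 →
      volume (σ ⁻¹' N ∩ Ioo 0 1) = 0) :
    m01.map σ ≪ volume := by
  refine Measure.AbsolutelyContinuous.mk fun N hN hN0 => ?_
  have hpre : σ ⁻¹' N ∩ Ioo 0 1 = σ ⁻¹' (N ∩ Ioo 0 1) ∩ Ioo 0 1 :=
    Subset.antisymm (fun t ht => ⟨⟨ht.1, hmapsTo ht.2⟩, ht.2⟩)
      (inter_subset_inter_left _ (preimage_mono inter_subset_left))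
  rw [Measure.map_apply hσ hN, m01, Measure.restrict_apply (hσ hN), hpre]
  exact hnull _ inter_subset_right (hN.inter measurableSet_Ioo)
    (measure_mono_null inter_subset_left hN0)

def weightedComp (a σ : ℝ → ℝ) (f : ℝ → ℂ) : ℝ → ℂ := fun t => (a t : ℂ) * f (σ t)

section WeightedComposition

variable {a σ : ℝ → ℝ} (ha : Measurable a) (ha0 : ∀ t, 0 ≤ a t) (hσ : Measurable σ)
include ha ha0 hσ

lemma setLIntegral_preimage_eq_of_nrmHalf_eq {E : Set ℝ} (hE : MeasurableSet E)
    (hEm : m01 E ≤ 2⁻¹) (hEσ : m01 (σ ⁻¹' E) ≤ 2⁻¹)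
    (hint : Integrable (weightedComp a σ (E.indicator 1)) m01)
    (hiso : nrmHalf (weightedComp a σ (E.indicator 1)) = nrmHalf (E.indicator 1)) :
    ∫⁻ x in σ ⁻¹' E, ENNReal.ofReal (a x) ∂m01 = m01 E := by
  have hf : Measurable (E.indicator (1 : ℝ → ℂ)) := measurable_const.indicator hE
  have hTf : Measurable (weightedComp a σ (E.indicator 1)) :=
    ha.complex_ofReal.mul (hf.comp hσ)
  have henorm : ∀ x, ‖weightedComp a σ (E.indicator 1) x‖ₑ
      = (σ ⁻¹' E).indicator (fun x => ENNReal.ofReal (a x)) x := by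
    intro x
    by_cases hx : σ x ∈ E <;> simp [weightedComp, hx, ← ofReal_norm, Real.norm_of_nonneg (ha0 x)]
  rw [nrmHalf_eq_lintegral_enorm_of_measure_support_le hf
      ((measure_mono Set.support_indicator_subset).trans hEm),
    nrmHalf_eq_lintegral_enorm_of_measure_support_le hTf ((measure_mono ?_).trans hEσ)] at hiso
  · have hlhs : ∫⁻ x, ‖weightedComp a σ (E.indicator 1) x‖ₑ ∂m01
        = ∫⁻ x in σ ⁻¹' E, ENNReal.ofReal (a x) ∂m01 := by
      rw [lintegral_congr henorm, lintegral_indicator (hσ hE)]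
    have hrhs : ∫⁻ x, ‖E.indicator (1 : ℝ → ℂ) x‖ₑ ∂m01 = m01 E := by
      simp [enorm_indicator_eq_indicator_enorm, lintegral_indicator hE]
    rw [hlhs, hrhs] at hiso
    exact (ENNReal.toReal_eq_toReal_iff' (hlhs ▸ hint.hasFiniteIntegral.ne)
      (measure_ne_top _ _)).1 hiso
  · exact Function.support_subset_iff'.2 fun x hx => by simp [weightedComp, show σ x ∉ E from hx]

lemma lintegral_weight_eq_one (hmapsTo : MapsTo σ (Ioo 0 1) (Ioo 0 1))
    (hac : m01.map σ ≪ volume)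
    (hmaps : ∀ f : ℝ → ℂ, Integrable f m01 → Integrable (weightedComp a σ f) m01)
    (hiso : ∀ f : ℝ → ℂ, Integrable f m01 → nrmHalf (weightedComp a σ f) = nrmHalf f) :
    ∫⁻ x, ENNReal.ofReal (a x) ∂m01 = 1 := by
  have hm01 : m01 ≪ volume := Measure.absolutelyContinuous_of_le Measure.restrict_le_self
  obtain ⟨δ, hδ, hsmall⟩ :=
    (hac.add_left hm01).exists_pos_forall_measure_lt (ε := 2⁻¹) (by simp)
  obtain ⟨r, -, hr, hrδ⟩ := ENNReal.lt_iff_exists_real_btwn.1 hδ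
  set ν := (m01.withDensity fun x => ENNReal.ofReal (a x)).map σ
  have hν : ν (Ioo 0 1) = m01 (Ioo 0 1) := by
    refine measure_eq_of_forall_volume_le measurableSet_Ioo (ENNReal.ofReal_pos.1 hr)
      fun E _ hE hvol => ?_
    have hlt := hsmall E (hvol.trans_lt hrδ)
    rw [Measure.add_apply, Measure.map_apply hσ hE] at hlt
    have hind : Integrable (E.indicator (1 : ℝ → ℂ)) m01 := (integrable_const 1).indicator hE
    rw [Measure.map_apply hσ hE, withDensity_apply _ (hσ hE)]
    exact setLIntegral_preimage_eq_of_nrmHalf_eq ha ha0 hσ hE (le_add_self.trans hlt.le)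
      (le_self_add.trans hlt.le) (hmaps _ hind) (hiso _ hind)
  have hpre : m01.restrict (σ ⁻¹' Ioo 0 1) = m01 :=
    Measure.restrict_eq_self_of_ae_mem
      ((ae_restrict_mem measurableSet_Ioo).mono fun _ h => hmapsTo h)
  rw [Measure.map_apply hσ measurableSet_Ioo, withDensity_apply _ (hσ measurableSet_Ioo),
    hpre] at hν
  simpa [m01] using hν

end WeightedComposition

theorem weight_eq_one_of_isometry_general
    (a : ℝ → ℝ) (ha : Measurable a) (ha0 : ∀ t, 0 ≤ a t)
    (σ : ℝ → ℝ) (hσmeas : Measurable σ)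
    (hbij : Set.BijOn σ (Set.Ioo 0 1) (Set.Ioo 0 1))
    (hnull : ∀ N : Set ℝ, N ⊆ Set.Ioo 0 1 → MeasurableSet N → volume N = 0 →
      volume (σ ⁻¹' N ∩ Set.Ioo 0 1) = 0)
    (hmaps : ∀ f : ℝ → ℂ, Integrable f m01 →
      Integrable (fun t => (a t : ℂ) * f (σ t)) m01)
    (hiso : ∀ f : ℝ → ℂ, Integrable f m01 →
      nrmHalf (fun t => (a t : ℂ) * f (σ t)) = nrmHalf f) :
    ∀ᵐ t ∂m01, a t = 1 := by
  have hL1 : ∫⁻ t, ‖(a t : ℂ)‖ₑ ∂m01 = 1 := by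
    simp_rw [← ofReal_norm, Complex.norm_real, Real.norm_of_nonneg (ha0 _)]
    exact lintegral_weight_eq_one ha ha0 hσmeas hbij.mapsTo
      (map_m01_absolutelyContinuous hσmeas hbij.mapsTo hnull) hmaps hiso
  have hhalf : nrmHalf (fun t => (a t : ℂ)) = 1 / 2 := by
    simpa [nrmHalf_one] using hiso 1 (integrable_const 1)
  filter_upwards [ae_norm_eq_one_of_nrmHalf_eq_half ha.complex_ofReal hL1 hhalf]
    with t ht
  rwa [Complex.norm_real, Real.norm_of_nonneg (ha0 t)] at ht

/-- If a weighted composition operator `(Tf)(t) = a(t)·f(σ(t))` with a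
nonnegative measurable weight `a` and a null-preserving Borel bijection `σ` of `(0,1)` maps
`L_1(0,1)` onto itself and is an isometry for the norm `‖f‖ = ∫_0^{1/2} μ(s;f) ds`, then
`a = 1` almost everywhere. -/
theorem weight_eq_one_of_isometry
    (a : ℝ → ℝ) (ha : Measurable a) (ha0 : ∀ t, 0 ≤ a t)
    (σ : ℝ → ℝ) (hσmeas : Measurable σ)
    (hbij : Set.BijOn σ (Set.Ioo 0 1) (Set.Ioo 0 1))
    (hinv : ∃ τ : ℝ → ℝ, Measurable τ ∧ Set.InvOn τ σ (Set.Ioo 0 1) (Set.Ioo 0 1))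
    (hnull : ∀ N : Set ℝ, N ⊆ Set.Ioo 0 1 → MeasurableSet N → volume N = 0 →
      volume (σ ⁻¹' N ∩ Set.Ioo 0 1) = 0)
    (hmaps : ∀ f : ℝ → ℂ, Integrable f m01 →
      Integrable (fun t => (a t : ℂ) * f (σ t)) m01)
    (hsurj : ∀ g : ℝ → ℂ, Integrable g m01 → ∃ f : ℝ → ℂ, Integrable f m01 ∧
      (fun t => (a t : ℂ) * f (σ t)) =ᵐ[m01] g)
    (hiso : ∀ f : ℝ → ℂ, Integrable f m01 →
      nrmHalf (fun t => (a t : ℂ) * f (σ t)) = nrmHalf f) :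
    ∀ᵐ t ∂m01, a t = 1 :=
  weight_eq_one_of_isometry_general a ha ha0 σ hσmeas hbij hnull hmaps hiso

end RenormedL1
end
end
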